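/- arXiv:1302.4906 — 5 statements merged into one kernel-verified Lean document; each statement's English description precedes it below -/
import Mathlib

section
/- Let F be an anti-invariant Riemannian submersion from a (2m+1)-dimensional Sasakian manifold M(φ,ξ,η,g_M) onto an n-dimensional Riemannian manifold (N,g_N) such that φ(ker F_*) = (ker F_*)^⊥. Then the characteristic vector field ξ is vertical (i.e. ξ ∈ ker F_*) and m = n. -/
open scoped RealInnerProductSpace

/-- Pointwise formalization of Theorem 1: the tangent space of the `(2m+1)`-
dimensional Sasakian manifold `M` is modeled by a real inner product space `V`
carrying the almost contact metric structure `(phi, xi, eta)`; `K` is the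
vertical space `ker F_*` of the anti-invariant Riemannian submersion
`F : M → N` (with `dim N = n = dim Kᗮ`). If `φ(ker F_*) = (ker F_*)^⊥`
then `ξ` is vertical and `m = n`. -/
theorem xi_vertical_and_dim_eq
    (V : Type) [NormedAddCommGroup V] [InnerProductSpace ℝ V]
    [FiniteDimensional ℝ V]
    (m n : ℕ) (hdim : Module.finrank ℝ V = 2 * m + 1)
    (phi : V →ₗ[ℝ] V) (xi : V) (eta : V →ₗ[ℝ] ℝ)
    (hphi2 : ∀ X, phi (phi X) = -X + eta X • xi)
    (hphixi : phi xi = 0)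
    (hetaphi : ∀ X, eta (phi X) = 0)
    (hetaxi : eta xi = 1)
    (hg : ∀ X Y, ⟪phi X, phi Y⟫ = ⟪X, Y⟫ - eta X * eta Y)
    (heta : ∀ X, eta X = ⟪X, xi⟫)
    (K : Submodule ℝ V)
    (hn : Module.finrank ℝ Kᗮ = n)
    (hanti : K.map phi = Kᗮ) :
    xi ∈ K ∧ m = n := by
    -- ξ is orthogonal to Kᗮ, hence in K
  have hxiK : xi ∈ K := by
    rw [← Submodule.orthogonal_orthogonal K]
    intro w hw
    rw [← hanti] at hw
    obtain ⟨u, hu, rfl⟩ := hw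
    have h0 : ⟪phi u, xi⟫ = 0 := by rw [← heta, hetaphi]
    exact h0
  refine ⟨hxiK, ?_⟩
  have hxine : xi ≠ 0 := by
    intro h
    rw [h, map_zero] at hetaxi
    exact one_ne_zero hetaxi.symm
  -- restriction of phi to K
  set f := phi.domRestrict K with hf
  have hrange : LinearMap.range f = Kᗮ := by
    rw [← hanti, hf, LinearMap.range_domRestrict]
  have hker : LinearMap.ker f = Submodule.span ℝ {(⟨xi, hxiK⟩ : K)} := by
    ext x
    rw [Submodule.mem_span_singleton, LinearMap.mem_ker]
    constructor
    · intro h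
      refine ⟨eta x, ?_⟩
      have h2 := hphi2 (x : V)
      rw [show phi (x : V) = f x from rfl, h, map_zero] at h2
      have : (x : V) = eta (x : V) • xi := by
        have h3 : -(x : V) + eta (x : V) • xi = 0 := h2.symm
        rw [neg_add_eq_zero] at h3
        exact h3
      exact Subtype.ext (by simpa using this.symm)
    · rintro ⟨c, rfl⟩
      show phi ((c • (⟨xi, hxiK⟩ : K) : K) : V) = 0
      simp [hphixi]
  have hkerdim : Module.finrank ℝ (LinearMap.ker f) = 1 := by
    rw [hker]
    exact finrank_span_singleton (by simpa [Subtype.ext_iff] using hxine)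
  have hrangedim : Module.finrank ℝ (LinearMap.range f) = n := by
    rw [hrange, hn]
  have hrn := LinearMap.finrank_range_add_finrank_ker f
  have hsum : Module.finrank ℝ K + Module.finrank ℝ Kᗮ = 2 * m + 1 := by
    rw [Submodule.finrank_add_finrank_orthogonal, hdim]
  rw [hrangedim, hkerdim] at hrn
  omega
end

section
/- Let F be an anti-invariant Riemannian submersion from a Sasakian manifold M(φ,ξ,η,g_M) with vertical structure vector field ξ onto a Riemannian manifold (N,g_N). Then the fibers of F are not totally umbilical. -/
/-- Algebraic model of a Riemannian submersion `F : (M,g_M) → (N,g_N)`: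
`Fn` plays the role of smooth functions on `M`, `VF` of vector fields on `M`,
`g` is the metric, `der` the directional derivative, `nabla` the Levi-Civita
connection, `bracket` the Lie bracket, and `vert`/`horiz` the projections onto
the vertical distribution `ker F_*` and the horizontal distribution
`(ker F_*)^⊥` determined by the fibers of the submersion. -/
structure RiemannianSubmersionData (Fn VF : Type) [CommRing Fn] [Algebra ℝ Fn]
    [AddCommGroup VF] [Module Fn VF] where
  g : VF → VF → Fn
  g_symm : ∀ X Y, g X Y = g Y X
  g_add_left : ∀ X Y Z, g (X + Y) Z = g X Z + g Y Z
  g_smul_left : ∀ (f : Fn) (X Y : VF), g (f • X) Y = f * g X Y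
  g_nondeg : ∀ X, (∀ Y, g X Y = 0) → X = 0
  der : VF → Fn → Fn
  der_add : ∀ X f₁ f₂, der X (f₁ + f₂) = der X f₁ + der X f₂
  der_mul : ∀ X f₁ f₂, der X (f₁ * f₂) = f₁ * der X f₂ + f₂ * der X f₁
  bracket : VF → VF → VF
  nabla : VF → VF → VF
  nabla_add_left : ∀ X Y Z, nabla (X + Y) Z = nabla X Z + nabla Y Z
  nabla_add_right : ∀ X Y Z, nabla X (Y + Z) = nabla X Y + nabla X Z
  nabla_smul_left : ∀ (f : Fn) (X Y : VF), nabla (f • X) Y = f • nabla X Y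
  nabla_smul_right : ∀ (f : Fn) (X Y : VF),
    nabla X (f • Y) = f • nabla X Y + der X f • Y
  torsion_free : ∀ X Y, nabla X Y - nabla Y X = bracket X Y
  compat : ∀ X Y Z, der X (g Y Z) = g (nabla X Y) Z + g Y (nabla X Z)
  vert : VF → VF
  horiz : VF → VF
  vert_add : ∀ X Y, vert (X + Y) = vert X + vert Y
  vert_smul : ∀ (f : Fn) (X : VF), vert (f • X) = f • vert X
  horiz_add : ∀ X Y, horiz (X + Y) = horiz X + horiz Y
  horiz_smul : ∀ (f : Fn) (X : VF), horiz (f • X) = f • horiz X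
  vert_add_horiz : ∀ X, vert X + horiz X = X
  vert_vert : ∀ X, vert (vert X) = vert X
  vert_horiz : ∀ X, vert (horiz X) = 0
  horiz_vert : ∀ X, horiz (vert X) = 0
  g_vert_horiz : ∀ X Y, g (vert X) (horiz Y) = 0
  vert_bracket : ∀ X Y, vert X = X → vert Y = Y → vert (bracket X Y) = bracket X Y

namespace RiemannianSubmersionData

variable {Fn VF : Type} [CommRing Fn] [Algebra ℝ Fn] [AddCommGroup VF] [Module Fn VF]

/-- O'Neill tensor `T_E F = H∇_{VE}(VF) + V∇_{VE}(HF)`. -/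
def T (S : RiemannianSubmersionData Fn VF) (E F : VF) : VF :=
  S.horiz (S.nabla (S.vert E) (S.vert F)) + S.vert (S.nabla (S.vert E) (S.horiz F))

/-- O'Neill tensor `A_E F = V∇_{HE}(HF) + H∇_{HE}(VF)`. -/
def A (S : RiemannianSubmersionData Fn VF) (E F : VF) : VF :=
  S.vert (S.nabla (S.horiz E) (S.horiz F)) + S.horiz (S.nabla (S.horiz E) (S.vert F))

end RiemannianSubmersionData

/-- A Riemannian submersion from a Sasakian manifold `M(φ,ξ,η,g)` onto a
Riemannian manifold: the total space carries an almost contact metric structure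
`(phi, xi, eta, g)` satisfying the Sasakian condition
`(∇_X φ)Y = g(X,Y)ξ - η(Y)X` (and hence `R(ξ,X)Y = g(X,Y)ξ - η(Y)X`). -/
structure SasakianSubmersionData (Fn VF : Type) [CommRing Fn] [Algebra ℝ Fn]
    [AddCommGroup VF] [Module Fn VF] extends RiemannianSubmersionData Fn VF where
  phi : VF → VF
  xi : VF
  eta : VF → Fn
  phi_add : ∀ X Y, phi (X + Y) = phi X + phi Y
  phi_smul : ∀ (f : Fn) (X : VF), phi (f • X) = f • phi X
  eta_add : ∀ X Y, eta (X + Y) = eta X + eta Y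
  eta_smul : ∀ (f : Fn) (X : VF), eta (f • X) = f * eta X
  phi_phi : ∀ X, phi (phi X) = -X + eta X • xi
  phi_xi : phi xi = 0
  eta_phi : ∀ X, eta (phi X) = 0
  eta_xi : eta xi = 1
  g_phi : ∀ X Y, g (phi X) (phi Y) = g X Y - eta X * eta Y
  eta_g : ∀ X, eta X = g X xi
  sasaki : ∀ X Y, nabla X (phi Y) - phi (nabla X Y) = g X Y • xi - eta Y • X
  curv_xi : ∀ X Y, nabla xi (nabla X Y) - nabla X (nabla xi Y)
      - nabla (bracket xi X) Y = g X Y • xi - eta Y • X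

namespace SasakianSubmersionData

variable {Fn VF : Type} [CommRing Fn] [Algebra ℝ Fn] [AddCommGroup VF] [Module Fn VF]

/-- Vertical part `BX` of `φX` for horizontal `X`. -/
def B (S : SasakianSubmersionData Fn VF) (X : VF) : VF := S.vert (S.phi X)

/-- Horizontal (`μ`-)part `CX` of `φX` for horizontal `X`. -/
def C (S : SasakianSubmersionData Fn VF) (X : VF) : VF := S.horiz (S.phi X)

/-- O'Neill tensor `T`. -/
def T (S : SasakianSubmersionData Fn VF) : VF → VF → VF :=
  S.toRiemannianSubmersionData.T

/-- O'Neill tensor `A`. -/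
def A (S : SasakianSubmersionData Fn VF) : VF → VF → VF :=
  S.toRiemannianSubmersionData.A

/-- `F` is anti-invariant: `φ(ker F_*) ⊆ (ker F_*)^⊥`. -/
def AntiInvariant (S : SasakianSubmersionData Fn VF) : Prop :=
  ∀ U, S.vert U = U → S.horiz (S.phi U) = S.phi U

end SasakianSubmersionData

/-! In a Sasakian manifold `∇_X ξ = -φX`, so for vertical `U` and vertical `ξ` the O'Neill tensor
gives `T_U ξ = -horiz (φU)`, which is `-φU` when `F` is anti-invariant. Total umbilicity at `U = W = ξ`
forces the mean curvature `H = g(ξ,ξ) H = T_ξ ξ = 0`, and then `φU = -T_U ξ = 0` for every vertical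
`U`. -/

namespace RiemannianSubmersionData

variable {Fn VF : Type} [CommRing Fn] [Algebra ℝ Fn] [AddCommGroup VF] [Module Fn VF]
  (S : RiemannianSubmersionData Fn VF)

theorem der_one (X : VF) : S.der X 1 = 0 := by
  simpa using S.der_mul X 1 1

theorem nabla_zero (X : VF) : S.nabla X 0 = 0 := by
  simpa using S.nabla_add_right X 0 0

theorem vert_zero : S.vert 0 = 0 := by
  simpa using S.vert_add 0 0

theorem horiz_zero : S.horiz 0 = 0 := by
  simpa using S.horiz_add 0 0

theorem horiz_eq_zero_of_vert_eq {X : VF} (hX : S.vert X = X) : S.horiz X = 0 := by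
  simpa [hX] using S.vert_add_horiz X

theorem horiz_neg (X : VF) : S.horiz (-X) = -S.horiz X := by
  simpa using S.horiz_smul (-1) X

end RiemannianSubmersionData

namespace SasakianSubmersionData

variable {Fn VF : Type} [CommRing Fn] [Algebra ℝ Fn] [AddCommGroup VF] [Module Fn VF]
  (S : SasakianSubmersionData Fn VF)

theorem g_xi_xi : S.g S.xi S.xi = 1 := by
  rw [← S.eta_g, S.eta_xi]

theorem phi_sub (X Y : VF) : S.phi (X - Y) = S.phi X - S.phi Y :=
  (AddMonoidHom.mk' S.phi S.phi_add).map_sub X Y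

/-- `ξ` has constant length, so `∇_X ξ ⊥ ξ`; this needs `2` to be invertible in `Fn`. -/
theorem eta_nabla_xi (X : VF) : S.eta (S.nabla X S.xi) = 0 := by
  have h := S.compat X S.xi S.xi
  rw [g_xi_xi, S.der_one, S.g_symm S.xi, ← two_smul ℝ, ← S.eta_g] at h
  simpa using h.symm

theorem nabla_xi (X : VF) : S.nabla X S.xi = -S.phi X := by
  have h := S.sasaki X S.xi
  rw [S.phi_xi, S.nabla_zero, S.eta_xi, one_smul, ← S.eta_g, zero_sub] at h
  have := congrArg S.phi h
  rw [phi_sub, S.phi_smul, S.phi_xi, smul_zero, zero_sub, ← neg_one_smul Fn, S.phi_smul,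
    S.phi_phi, eta_nabla_xi, zero_smul, add_zero] at this
  simpa using this

theorem T_xi (hxi : S.vert S.xi = S.xi) {U : VF} (hU : S.vert U = U) :
    S.T U S.xi = -S.horiz (S.phi U) := by
  simp only [T, RiemannianSubmersionData.T, hU, hxi, S.horiz_eq_zero_of_vert_eq hxi,
    S.nabla_zero, S.vert_zero, add_zero, nabla_xi, S.horiz_neg]

end SasakianSubmersionData

open SasakianSubmersionData in
/-- Theorem 2: for an anti-invariant Riemannian submersion from a Sasakian
manifold with vertical structure vector field `ξ` (whose fibers are not
contained in the line spanned by `ξ`, i.e. some vertical `U` has `φU ≠ 0`),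
the fibers are not totally umbilical, i.e. there is no horizontal mean
curvature field `H` with `T_U W = g(U,W) H` for all vertical `U, W`. -/
theorem fibers_not_totally_umbilical {Fn VF : Type} [CommRing Fn] [Algebra ℝ Fn]
    [AddCommGroup VF] [Module Fn VF]
    (S : SasakianSubmersionData Fn VF)
    (hxi : S.vert S.xi = S.xi)
    (hanti : S.AntiInvariant)
    (hnd : ∃ U, S.vert U = U ∧ S.phi U ≠ 0) :
    ¬ ∃ H : VF, S.horiz H = H ∧
        ∀ U W, S.vert U = U → S.vert W = W → S.T U W = S.g U W • H := by
  rintro ⟨H, -, humb⟩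
  obtain ⟨U, hU, hφU⟩ := hnd
  have hH : H = 0 := by
    have h := humb S.xi S.xi hxi hxi
    rwa [T_xi S hxi hxi, S.phi_xi, S.horiz_zero, g_xi_xi, one_smul, neg_zero, eq_comm] at h
  have h := humb U S.xi hU hxi
  rw [T_xi S hxi hU, hanti U hU, hH, smul_zero, neg_eq_zero] at h
  exact hφU h
end

section
/- Let F be an anti-invariant Riemannian submersion from a Sasakian manifold with vertical ξ. Then for horizontal X and vertical U: CX = -A_X ξ and g_M(A_X ξ, φU) = 0, where A is the O'Neill tensor and C is the μ-component of φ restricted to horizontal vectors. -/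
open SasakianSubmersionData in
/-- Lemma 4 (first two identities): for an anti-invariant Riemannian submersion
from a Sasakian manifold with vertical `ξ`, horizontal `X` and vertical `U`:
`CX = -A_X ξ` and `g(A_X ξ, φU) = 0`. -/
theorem C_eq_neg_A_xi {Fn VF : Type} [CommRing Fn] [Algebra ℝ Fn]
    [AddCommGroup VF] [Module Fn VF]
    (S : SasakianSubmersionData Fn VF)
    (hxi : S.vert S.xi = S.xi)
    (hanti : S.AntiInvariant)
    (X U : VF) (hX : S.horiz X = X) (hU : S.vert U = U) :
    S.C X = -(S.A X S.xi) ∧ S.g (S.A X S.xi) (S.phi U) = 0 := by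
  -- basic derived facts
  have vz : S.vert 0 = 0 := by
    have h := S.vert_smul 0 0; simpa using h
  have nz : S.nabla X 0 = 0 := by
    have h := S.nabla_add_right X 0 0
    rw [add_zero] at h
    exact (left_eq_add.mp h)
  have phi_neg : ∀ a, S.phi (-a) = -S.phi a := by
    intro a
    rw [← neg_one_smul Fn a, S.phi_smul, neg_one_smul]
  have phi_sub : ∀ a b, S.phi (a - b) = S.phi a - S.phi b := by
    intro a b
    rw [sub_eq_add_neg, S.phi_add, phi_neg, ← sub_eq_add_neg]
  have horiz_neg : ∀ a, S.horiz (-a) = -S.horiz a := by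
    intro a
    rw [← neg_one_smul Fn a, S.horiz_smul, neg_one_smul]
  have horiz_sub : ∀ a b, S.horiz (a - b) = S.horiz a - S.horiz b := by
    intro a b
    rw [sub_eq_add_neg, S.horiz_add, horiz_neg, ← sub_eq_add_neg]
  have g_neg_left : ∀ a b, S.g (-a) b = -S.g a b := by
    intro a b
    rw [← neg_one_smul Fn a, S.g_smul_left, neg_one_mul]
  have g_sub_left : ∀ a b c, S.g (a - b) c = S.g a c - S.g b c := by
    intro a b c
    rw [sub_eq_add_neg, S.g_add_left, g_neg_left, ← sub_eq_add_neg]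
  have hxih : S.horiz S.xi = 0 := by
    have h := S.horiz_vert S.xi; rw [hxi] at h; exact h
  -- nabla X xi computation
  have h1 : S.phi (S.nabla X S.xi) = X - S.g X S.xi • S.xi := by
    have hs := S.sasaki X S.xi
    rw [S.phi_xi, nz, S.eta_xi, one_smul, zero_sub,
      neg_eq_iff_eq_neg] at hs
    rw [hs, neg_sub]
  have h2 : S.nabla X S.xi = S.eta (S.nabla X S.xi) • S.xi - S.phi X := by
    have hpp := S.phi_phi (S.nabla X S.xi)
    rw [h1, phi_sub, S.phi_smul, S.phi_xi, smul_zero, sub_zero] at hpp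
    rw [hpp]; abel
  -- A X xi = - C X
  have hA : S.A X S.xi = -(S.C X) := by
    show S.toRiemannianSubmersionData.A X S.xi = -(S.C X)
    unfold RiemannianSubmersionData.A
    rw [hX, hxih, hxi, nz, vz, zero_add, h2, horiz_sub, S.horiz_smul, hxih,
      smul_zero, zero_sub]
    rfl
  refine ⟨by rw [hA, neg_neg], ?_⟩
  rw [hA, g_neg_left]
  have hgXU : S.g X U = 0 := by
    have h := S.g_vert_horiz U X
    rw [hU, hX] at h
    rw [S.g_symm]; exact h
  have hgXxi : S.g X S.xi = 0 := by
    have h := S.g_vert_horiz S.xi X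
    rw [hxi, hX] at h
    rw [S.g_symm]; exact h
  have hvert : S.g (S.vert (S.phi X)) (S.phi U) = 0 := by
    rw [← hanti U hU]
    exact S.g_vert_horiz _ _
  have hCX : S.C X = S.phi X - S.vert (S.phi X) := by
    show S.horiz (S.phi X) = _
    rw [eq_sub_iff_add_eq, add_comm, S.vert_add_horiz]
  rw [hCX, g_sub_left, hvert, sub_zero, S.g_phi, hgXU, S.eta_g, hgXxi,
    zero_mul, sub_zero, neg_zero]
end

section
/- Let F be an anti-invariant Riemannian submersion from a Sasakian manifold M(φ,ξ,η,g_M) onto a Riemannian manifold (N,g_N). Then F is not a totally geodesic map. -/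
open SasakianSubmersionData in
/-- Theorem 5: an anti-invariant Riemannian submersion `F` from a Sasakian
manifold (with vertical `ξ`, and some vertical `U` with `φU ≠ 0`) is never a
totally geodesic map.  Here `WF` models vector fields along `F` valued in `N`,
`Fstar` is the differential `F_*` (whose kernel is the vertical distribution),
`nablaF` the pullback connection, and the second fundamental form of `F` is
`(∇F_*)(X,Y) = ∇^F_X F_*Y - F_*(∇_X Y)`. -/
theorem not_totally_geodesic_map {Fn VF WF : Type} [CommRing Fn] [Algebra ℝ Fn]
    [AddCommGroup VF] [Module Fn VF] [AddCommGroup WF]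
    (S : SasakianSubmersionData Fn VF)
    (hxi : S.vert S.xi = S.xi)
    (hanti : S.AntiInvariant)
    (hnd : ∃ U, S.vert U = U ∧ S.phi U ≠ 0)
    (Fstar : VF → WF)
    (hFadd : ∀ X Y, Fstar (X + Y) = Fstar X + Fstar Y)
    (hFker : ∀ X, Fstar X = 0 ↔ S.vert X = X)
    (nablaF : VF → WF → WF)
    (hNadd : ∀ X w w', nablaF X (w + w') = nablaF X w + nablaF X w') :
    ¬ ∀ X Y, nablaF X (Fstar Y) - Fstar (S.nabla X Y) = 0 := by
  intro h
  obtain ⟨U, hU, hphiU⟩ := hnd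
  -- auxiliary: halving in Fn
  have half : ∀ a : Fn, a + a = 0 → a = 0 := by
    intro a ha
    have key : algebraMap ℝ Fn (1/2) * (a + a) = a := by
      rw [mul_add, ← add_mul, ← map_add]
      norm_num
    rw [ha, mul_zero] at key
    exact key.symm
  -- der X 1 = 0
  have der_one : ∀ X, S.der X 1 = 0 := by
    intro X
    have h1 : S.der X 1 = S.der X 1 + S.der X 1 := by
      simpa using S.der_mul X 1 1
    exact (left_eq_add.mp h1)
  -- zero lemmas
  have nabla_zero : ∀ X, S.nabla X (0 : VF) = 0 := by
    intro X
    have := S.nabla_add_right X 0 0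
    rw [add_zero] at this
    exact add_eq_left.mp this.symm
  have vert_zero : S.vert (0 : VF) = 0 := by
    have := S.vert_add 0 0
    rw [add_zero] at this
    exact add_eq_left.mp this.symm
  have vert_neg : ∀ Z, S.vert (-Z) = -S.vert Z := by
    intro Z
    have := S.vert_add Z (-Z)
    rw [add_neg_cancel, vert_zero] at this
    exact (eq_neg_of_add_eq_zero_right this.symm)
  have nablaF_zero : ∀ X, nablaF X (0 : WF) = 0 := by
    intro X
    have := hNadd X 0 0
    rw [add_zero] at this
    exact add_eq_left.mp this.symm
  have phi_neg : ∀ Z, S.phi (-Z) = -S.phi Z := by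
    intro Z
    have h0 : S.phi (0 : VF) = 0 := by
      have := S.phi_add 0 0
      rw [add_zero] at this
      exact add_eq_left.mp this.symm
    have := S.phi_add Z (-Z)
    rw [add_neg_cancel, h0] at this
    exact (eq_neg_of_add_eq_zero_right this.symm)
  -- eta (nabla X ξ) = 0
  have eta_nabla_xi : ∀ X, S.eta (S.nabla X S.xi) = 0 := by
    intro X
    have hc := S.compat X S.xi S.xi
    have hg : S.g S.xi S.xi = 1 := by rw [← S.eta_g, S.eta_xi]
    rw [hg, der_one, S.g_symm S.xi (S.nabla X S.xi)] at hc
    rw [S.eta_g]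
    exact half _ hc.symm
  -- ∇_X ξ = -φX
  have nabla_xi : ∀ X, S.nabla X S.xi = -S.phi X := by
    intro X
    have hs := S.sasaki X S.xi
    rw [S.phi_xi, nabla_zero, S.eta_xi, one_smul, zero_sub] at hs
    -- hs : -S.phi (S.nabla X S.xi) = S.g X S.xi • S.xi - X
    have h1 : S.phi (S.nabla X S.xi) = X - S.g X S.xi • S.xi := by
      have := congrArg Neg.neg hs
      rw [neg_neg, neg_sub] at this
      exact this
    have h2 := congrArg S.phi h1
    rw [S.phi_phi, eta_nabla_xi, zero_smul, add_zero] at h2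
    -- h2 : -(S.nabla X S.xi) = S.phi (X - g X ξ • ξ)
    have h3 : S.phi (X - S.g X S.xi • S.xi) = S.phi X := by
      rw [sub_eq_add_neg, S.phi_add, phi_neg, S.phi_smul, S.phi_xi, smul_zero,
        neg_zero, add_zero]
    rw [h3] at h2
    have := congrArg Neg.neg h2
    rw [neg_neg] at this
    exact this
  -- apply totally geodesic to (U, ξ)
  have hFxi : Fstar S.xi = 0 := (hFker S.xi).mpr hxi
  have htg := h U S.xi
  rw [hFxi, nablaF_zero, zero_sub, neg_eq_zero] at htg
  -- htg : Fstar (S.nabla U S.xi) = 0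
  have hv : S.vert (S.nabla U S.xi) = S.nabla U S.xi := (hFker _).mp htg
  rw [nabla_xi, vert_neg] at hv
  have hv2 : S.vert (S.phi U) = S.phi U := by
    have := congrArg Neg.neg hv
    rwa [neg_neg, neg_neg] at this
  have hh := hanti U hU
  have : S.phi U = 0 := by
    calc S.phi U = S.vert (S.phi U) := hv2.symm
      _ = S.vert (S.horiz (S.phi U)) := by rw [hh]
      _ = 0 := S.vert_horiz _
  exact hphiU this
end

section
/- Let F be an anti-invariant Riemannian submersion from a Sasakian manifold with φ(ker F_*) = (ker F_*)^⊥, where dim M = 2m+1 and dim N = n. Then F is harmonic if and only if Trace(φ ∘ T_V) = (2m-n) η(V) for every vertical vector field V. -/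
section AuxLemmas

namespace SasakianSubmersionData

variable {Fn VF : Type} [CommRing Fn] [Algebra ℝ Fn] [AddCommGroup VF] [Module Fn VF]
variable (S : SasakianSubmersionData Fn VF)

lemma g_zero_left (Y : VF) : S.g 0 Y = 0 := by
  have h := S.g_add_left 0 0 Y
  rw [add_zero] at h
  exact left_eq_add.mp h

lemma g_neg_left (X Y : VF) : S.g (-X) Y = - S.g X Y := by
  have h := S.g_smul_left (-1) X Y
  rwa [neg_one_smul, neg_one_mul] at h

lemma g_add_right (X Y Z : VF) : S.g X (Y + Z) = S.g X Y + S.g X Z := by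
  rw [S.g_symm, S.g_add_left, S.g_symm Y X, S.g_symm Z X]

lemma g_smul_right (f : Fn) (X Y : VF) : S.g X (f • Y) = f * S.g X Y := by
  rw [S.g_symm, S.g_smul_left, S.g_symm Y X]

lemma g_neg_right (X Y : VF) : S.g X (-Y) = - S.g X Y := by
  rw [S.g_symm, S.g_neg_left, S.g_symm Y X]

lemma g_sum_left {ι : Type*} (s : Finset ι) (f : ι → VF) (Y : VF) :
    S.g (∑ i ∈ s, f i) Y = ∑ i ∈ s, S.g (f i) Y :=
  map_sum (AddMonoidHom.mk' (fun X => S.g X Y) (fun a b => S.g_add_left a b Y)) f s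

lemma horiz_sum {ι : Type*} (s : Finset ι) (f : ι → VF) :
    S.horiz (∑ i ∈ s, f i) = ∑ i ∈ s, S.horiz (f i) :=
  map_sum (AddMonoidHom.mk' S.horiz S.horiz_add) f s

lemma vert_zero : S.vert 0 = 0 := by
  have h := S.vert_smul 0 0
  simpa using h

lemma horiz_zero : S.horiz 0 = 0 := by
  have h := S.horiz_smul 0 0
  simpa using h

lemma vert_neg (X : VF) : S.vert (-X) = - S.vert X := by
  have h := S.vert_smul (-1) X
  simpa using h

lemma horiz_neg (X : VF) : S.horiz (-X) = - S.horiz X := by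
  have h := S.horiz_smul (-1) X
  simpa using h

lemma vert_sub (X Y : VF) : S.vert (X - Y) = S.vert X - S.vert Y := by
  rw [sub_eq_add_neg, S.vert_add, S.vert_neg, sub_eq_add_neg]

lemma horiz_sub (X Y : VF) : S.horiz (X - Y) = S.horiz X - S.horiz Y := by
  rw [sub_eq_add_neg, S.horiz_add, S.horiz_neg, sub_eq_add_neg]

lemma der_zero (X : VF) : S.der X 0 = 0 := by
  have h := S.der_add X 0 0
  rw [add_zero] at h
  exact left_eq_add.mp h

lemma nabla_zero_right (X : VF) : S.nabla X 0 = 0 := by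
  have h := S.nabla_smul_right 0 X 0
  simpa using h

lemma horiz_eq_zero {W : VF} (h : S.vert W = W) : S.horiz W = 0 := by
  calc S.horiz W = S.horiz (S.vert W) := by rw [h]
    _ = 0 := S.horiz_vert W

lemma vert_eq_zero {W : VF} (h : S.horiz W = W) : S.vert W = 0 := by
  calc S.vert W = S.vert (S.horiz W) := by rw [h]
    _ = 0 := S.vert_horiz W

lemma horiz_horiz (X : VF) : S.horiz (S.horiz X) = S.horiz X := by
  have h := congrArg S.horiz (S.vert_add_horiz X)
  rwa [S.horiz_add, S.horiz_vert, zero_add] at h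

lemma g_vh {W X : VF} (hW : S.vert W = W) (hX : S.horiz X = X) : S.g W X = 0 := by
  calc S.g W X = S.g (S.vert W) (S.horiz X) := by rw [hW, hX]
    _ = 0 := S.g_vert_horiz W X

/-- pairing a vertical vector only sees the vertical part. -/
lemma g_vert_right {W : VF} (hW : S.vert W = W) (A : VF) :
    S.g W A = S.g W (S.vert A) := by
  conv_lhs => rw [← S.vert_add_horiz A]
  rw [S.g_add_right, S.g_vh hW (S.horiz_horiz A), add_zero]

/-- pairing a horizontal vector only sees the horizontal part. -/
lemma g_horiz_left {X : VF} (hX : S.horiz X = X) (A : VF) :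
    S.g A X = S.g (S.horiz A) X := by
  conv_lhs => rw [← S.vert_add_horiz A]
  rw [S.g_add_left, S.g_vh (S.vert_vert A) hX, zero_add]

lemma T_vv {V W : VF} (hV : S.vert V = V) (hW : S.vert W = W) :
    S.T V W = S.horiz (S.nabla V W) := by
  show S.toRiemannianSubmersionData.T V W = _
  unfold RiemannianSubmersionData.T
  rw [hV, hW, S.horiz_eq_zero hW, S.nabla_zero_right, S.vert_zero, add_zero]

lemma T_vh {V X : VF} (hV : S.vert V = V) (hX : S.horiz X = X) :
    S.T V X = S.vert (S.nabla V X) := by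
  show S.toRiemannianSubmersionData.T V X = _
  unfold RiemannianSubmersionData.T
  rw [hV, hX, S.vert_eq_zero hX, S.nabla_zero_right, S.horiz_zero, zero_add]

lemma T_symm {V W : VF} (hV : S.vert V = V) (hW : S.vert W = W) :
    S.T V W = S.T W V := by
  rw [S.T_vv hV hW, S.T_vv hW hV]
  have h : S.horiz (S.nabla V W) - S.horiz (S.nabla W V) = 0 := by
    rw [← S.horiz_sub, S.torsion_free, S.horiz_eq_zero (S.vert_bracket V W hV hW)]
  exact sub_eq_zero.mp h

lemma T_skew {V W X : VF} (hV : S.vert V = V) (hW : S.vert W = W)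
    (hX : S.horiz X = X) : S.g (S.T V W) X = - S.g W (S.T V X) := by
  have h0 : S.g W X = 0 := S.g_vh hW hX
  have hc := S.compat V W X
  rw [h0, S.der_zero] at hc
  have h1 : S.g (S.nabla V W) X = S.g (S.T V W) X := by
    rw [S.g_horiz_left hX, S.T_vv hV hW]
  have h2 : S.g W (S.nabla V X) = S.g W (S.T V X) := by
    rw [S.g_vert_right hW, S.T_vh hV hX]
  rw [h1, h2] at hc
  exact eq_neg_of_add_eq_zero_left hc.symm

end SasakianSubmersionData

end AuxLemmas

section SasAux

namespace SasakianSubmersionData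

variable {Fn VF : Type} [CommRing Fn] [Algebra ℝ Fn] [AddCommGroup VF] [Module Fn VF]
variable (S : SasakianSubmersionData Fn VF)

lemma g_sub_left (X Y Z : VF) : S.g (X - Y) Z = S.g X Z - S.g Y Z := by
  rw [sub_eq_add_neg, S.g_add_left, S.g_neg_left, sub_eq_add_neg]

lemma g_phi_xi (X : VF) : S.g (S.phi X) S.xi = 0 := by
  rw [← S.eta_g, S.eta_phi]

lemma phi_skew (X Y : VF) : S.g (S.phi X) Y = - S.g X (S.phi Y) := by
  have h := S.g_phi X (S.phi Y)
  rw [S.phi_phi, S.eta_phi, mul_zero, sub_zero, S.g_add_right, S.g_neg_right,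
    S.g_smul_right, S.g_phi_xi, mul_zero, add_zero] at h
  linear_combination -h

lemma eta_horiz (hxi : S.vert S.xi = S.xi) {X : VF} (hX : S.horiz X = X) :
    S.eta X = 0 := by
  rw [S.eta_g, S.g_symm]
  exact S.g_vh hxi hX

lemma phi_horiz_vert (hxi : S.vert S.xi = S.xi)
    (heq : ∀ X, S.horiz X = X → ∃ U, S.vert U = U ∧ S.phi U = X)
    {X : VF} (hX : S.horiz X = X) : S.vert (S.phi X) = S.phi X := by
  obtain ⟨U, hU, rfl⟩ := heq X hX
  rw [S.phi_phi, S.vert_add, S.vert_neg, hU, S.vert_smul, hxi]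

lemma T_phi (hxi : S.vert S.xi = S.xi) (hanti : S.AntiInvariant)
    (heq : ∀ X, S.horiz X = X → ∃ U, S.vert U = U ∧ S.phi U = X)
    {V W : VF} (hV : S.vert V = V) (hW : S.vert W = W) :
    S.T V (S.phi W) = S.phi (S.T V W) + S.g V W • S.xi - S.eta W • V := by
  have hφW : S.horiz (S.phi W) = S.phi W := hanti W hW
  rw [S.T_vh hV hφW]
  have hs := S.sasaki V W
  have hn : S.nabla V (S.phi W) =
      S.phi (S.nabla V W) + (S.g V W • S.xi - S.eta W • V) := by
    have := sub_eq_iff_eq_add.mp hs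
    rw [this]; abel
  rw [hn, S.vert_add, S.vert_sub, S.vert_smul, hxi, S.vert_smul, hV]
  have hdec : S.phi (S.nabla V W) =
      S.phi (S.vert (S.nabla V W)) + S.phi (S.horiz (S.nabla V W)) := by
    rw [← S.phi_add, S.vert_add_horiz]
  have h1 : S.vert (S.phi (S.vert (S.nabla V W))) = 0 :=
    S.vert_eq_zero (hanti _ (S.vert_vert _))
  have h2 : S.vert (S.phi (S.horiz (S.nabla V W))) = S.phi (S.horiz (S.nabla V W)) :=
    S.phi_horiz_vert hxi heq (S.horiz_horiz _)
  rw [hdec, S.vert_add, h1, h2, zero_add, ← S.T_vv hV hW]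
  abel

end SasakianSubmersionData

end SasAux

open SasakianSubmersionData Finset in
/-- Theorem 6: let `F` be an anti-invariant Riemannian submersion from a
`(2m+1)`-dimensional Sasakian manifold with `φ(ker F_*) = (ker F_*)^⊥` onto an
`n`-dimensional Riemannian manifold, and let `e` be an orthonormal frame of the
`(2m+1-n)`-dimensional vertical distribution `ker F_*`.  Then `F` is harmonic
(equivalently, by Eells–Sampson, its fibers are minimal: `Σ T_{e_i} e_i = 0`)
iff `Trace(φ ∘ T_V) = (2m-n) η(V)` for every vertical `V`. -/
theorem harmonic_iff_trace {Fn VF : Type} [CommRing Fn] [Algebra ℝ Fn]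
    [AddCommGroup VF] [Module Fn VF]
    (S : SasakianSubmersionData Fn VF)
    (hxi : S.vert S.xi = S.xi)
    (hanti : S.AntiInvariant)
    (heq : ∀ X, S.horiz X = X → ∃ U, S.vert U = U ∧ S.phi U = X)
    (m n : ℕ) (hn : n ≤ 2 * m)
    (e : Fin (2 * m + 1 - n) → VF)
    (he_vert : ∀ i, S.vert (e i) = e i)
    (he_on : ∀ i j, S.g (e i) (e j) = if i = j then 1 else 0)
    (he_span : ∀ V, S.vert V = V → V = ∑ i, S.g V (e i) • e i) :
    (∑ i, S.T (e i) (e i)) = 0 ↔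
      (∀ V, S.vert V = V →
        (∑ i, S.g (S.phi (S.T V (e i))) (e i)) = ((2 * m - n : ℕ) : Fn) * S.eta V) := by
  have hηe : ∀ V, S.vert V = V → ∑ i, S.g V (e i) * S.eta (e i) = S.eta V := by
    intro V hV
    calc ∑ i, S.g V (e i) * S.eta (e i)
        = ∑ i, S.g (S.g V (e i) • e i) S.xi := by
          refine Finset.sum_congr rfl fun i _ => ?_
          rw [S.g_smul_left, ← S.eta_g]
      _ = S.g (∑ i, S.g V (e i) • e i) S.xi := (S.g_sum_left _ _ _).symm
      _ = S.g V S.xi := by rw [← he_span V hV]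
      _ = S.eta V := (S.eta_g V).symm
  have hgee : ∑ i, S.g (e i) (e i) = ((2 * m + 1 - n : ℕ) : Fn) := by
    simp [he_on, Finset.card_univ]
  have key : ∀ V, S.vert V = V →
      (∑ i, S.g (S.phi (S.T V (e i))) (e i))
        = - S.g (∑ i, S.T (e i) (e i)) (S.phi V) + ((2 * m - n : ℕ) : Fn) * S.eta V := by
    intro V hV
    have term : ∀ i, S.g (S.phi (S.T V (e i))) (e i)
        = - S.g (S.T (e i) (e i)) (S.phi V) - S.g (e i) V * S.eta (e i)
            + S.eta V * S.g (e i) (e i) := by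
      intro i
      have hei := he_vert i
      have hφei : S.horiz (S.phi (e i)) = S.phi (e i) := hanti _ hei
      have hφV : S.horiz (S.phi V) = S.phi V := hanti _ hV
      have hgxe : S.g S.xi (e i) = S.eta (e i) := by rw [S.g_symm, ← S.eta_g]
      have hA := S.T_phi hxi hanti heq hV hei
      have hdec1 : S.phi (S.T V (e i))
          = S.T V (S.phi (e i)) - S.g V (e i) • S.xi + S.eta (e i) • V := by
        rw [hA]; abel
      have h1 : S.g (S.phi (S.T V (e i))) (e i) = S.g (S.T V (S.phi (e i))) (e i) := by
        rw [hdec1, S.g_add_left, S.g_sub_left, S.g_smul_left, S.g_smul_left, hgxe,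
          S.g_symm V (e i)]
        ring
      have hskew := S.T_skew hV hei hφei
      have h2 : S.g (S.T V (S.phi (e i))) (e i) = - S.g (S.T (e i) V) (S.phi (e i)) := by
        rw [← S.T_symm hV hei, S.g_symm]
        linear_combination hskew
      have h3 : - S.g (S.T (e i) V) (S.phi (e i)) = S.g (S.phi (S.T (e i) V)) (e i) :=
        (S.phi_skew (S.T (e i) V) (e i)).symm
      have hB := S.T_phi hxi hanti heq hei hV
      have hdec2 : S.phi (S.T (e i) V)
          = S.T (e i) (S.phi V) - S.g (e i) V • S.xi + S.eta V • e i := by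
        rw [hB]; abel
      have h4 : S.g (S.phi (S.T (e i) V)) (e i)
          = S.g (S.T (e i) (S.phi V)) (e i) - S.g (e i) V * S.eta (e i)
              + S.eta V * S.g (e i) (e i) := by
        rw [hdec2, S.g_add_left, S.g_sub_left, S.g_smul_left, S.g_smul_left, hgxe]
      have hskew2 := S.T_skew hei hei hφV
      have h5 : S.g (S.T (e i) (S.phi V)) (e i) = - S.g (S.T (e i) (e i)) (S.phi V) := by
        rw [S.g_symm]
        linear_combination hskew2
      linear_combination h1 + h2 + h3 + h4 + h5
    calc (∑ i, S.g (S.phi (S.T V (e i))) (e i))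
        = ∑ i, (- S.g (S.T (e i) (e i)) (S.phi V) - S.g (e i) V * S.eta (e i)
            + S.eta V * S.g (e i) (e i)) := Finset.sum_congr rfl fun i _ => term i
      _ = -(∑ i, S.g (S.T (e i) (e i)) (S.phi V)) - (∑ i, S.g (e i) V * S.eta (e i))
            + S.eta V * (∑ i, S.g (e i) (e i)) := by
          rw [Finset.sum_add_distrib, Finset.sum_sub_distrib, Finset.sum_neg_distrib,
            Finset.mul_sum]
      _ = - S.g (∑ i, S.T (e i) (e i)) (S.phi V) - S.eta V
            + S.eta V * ((2 * m + 1 - n : ℕ) : Fn) := by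
          have e1 : (∑ i, S.g (S.T (e i) (e i)) (S.phi V))
              = S.g (∑ i, S.T (e i) (e i)) (S.phi V) := (S.g_sum_left _ _ _).symm
          have e2 : (∑ i, S.g (e i) V * S.eta (e i)) = S.eta V := by
            calc (∑ i, S.g (e i) V * S.eta (e i))
                = ∑ i, S.g V (e i) * S.eta (e i) :=
                  Finset.sum_congr rfl fun i _ => by rw [S.g_symm (e i) V]
              _ = S.eta V := hηe V hV
          rw [e1, e2, hgee]
      _ = - S.g (∑ i, S.T (e i) (e i)) (S.phi V) + ((2 * m - n : ℕ) : Fn) * S.eta V := by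
          have hc : ((2 * m + 1 - n : ℕ) : Fn) = ((2 * m - n : ℕ) : Fn) + 1 := by
            have hk : (2 * m + 1 - n : ℕ) = (2 * m - n) + 1 := by omega
            rw [hk]
            push_cast
            ring
          rw [hc]
          ring
  constructor
  · intro h V hV
    rw [key V hV, h, S.g_zero_left, neg_zero, zero_add]
  · intro h
    apply S.g_nondeg
    intro Y
    have hH : S.horiz (∑ i, S.T (e i) (e i)) = ∑ i, S.T (e i) (e i) := by
      rw [S.horiz_sum]
      exact Finset.sum_congr rfl fun i _ => by
        rw [S.T_vv (he_vert i) (he_vert i), S.horiz_horiz]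
    have hzero : ∀ U, S.vert U = U → S.g (∑ i, S.T (e i) (e i)) (S.phi U) = 0 := by
      intro U hU
      have h1 := h U hU
      rw [key U hU] at h1
      linear_combination -h1
    have hdec : S.g (∑ i, S.T (e i) (e i)) Y
        = S.g (∑ i, S.T (e i) (e i)) (S.vert Y) + S.g (∑ i, S.T (e i) (e i)) (S.horiz Y) := by
      conv_lhs => rw [← S.vert_add_horiz Y]
      rw [S.g_add_right]
    rw [hdec]
    have hv : S.g (∑ i, S.T (e i) (e i)) (S.vert Y) = 0 := by
      rw [S.g_symm]
      exact S.g_vh (S.vert_vert Y) hH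
    obtain ⟨U, hU, hUY⟩ := heq (S.horiz Y) (S.horiz_horiz Y)
    rw [hv, zero_add, ← hUY]
    exact hzero U hU
end
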